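/- arXiv:math/9901040 — 2 statements merged into one kernel-verified Lean document; each statement's English description precedes it below -/
import Mathlib

section
/- For any indeterminate X and integer n ≥ 1, the sum over all partitions μ of n of (-1)^(n - ℓ(μ)) · X^ℓ(μ) / z_μ equals the binomial coefficient C(X, n) = X(X-1)···(X-n+1)/n!. -/
open Polynomial Finset

/-- `z μ = ∏_{i ≥ 1} i^{m_i(μ)} · m_i(μ)!` for a partition `μ` of `n`. -/
def zPart {n : ℕ} (μ : Nat.Partition n) : ℕ :=
  ∏ i ∈ Finset.Icc 1 n, i ^ (μ.parts.count i) * (μ.parts.count i).factorial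

/-- z as function of a bound and a multiset. -/
def zM (N : ℕ) (p : Multiset ℕ) : ℕ :=
  ∏ i ∈ Finset.Icc 1 N, i ^ (p.count i) * (p.count i).factorial

lemma zPart_eq_zM {n : ℕ} (μ : Nat.Partition n) : zPart μ = zM n μ.parts := rfl

lemma zM_pos (N : ℕ) (p : Multiset ℕ) (hp : 0 ∉ p) : 0 < zM N p := by
  refine Finset.prod_pos fun i hi => ?_
  have : 0 < i := (Finset.mem_Icc.1 hi).1
  exact Nat.mul_pos (Nat.pow_pos this) (Nat.factorial_pos _)

lemma mem_le_of_partition {n : ℕ} (μ : Nat.Partition n) {i : ℕ} (hi : i ∈ μ.parts) :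
    i ∈ Finset.Icc 1 n := by
  refine Finset.mem_Icc.2 ⟨μ.parts_pos hi, ?_⟩
  calc i ≤ μ.parts.sum := Multiset.le_sum_of_mem hi
  _ = n := μ.parts_sum

lemma zM_mono (N M : ℕ) (hNM : N ≤ M) (p : Multiset ℕ) (hp : ∀ i ∈ p, i ≤ N) :
    zM M p = zM N p := by
  unfold zM
  rw [← Finset.prod_subset (Finset.Icc_subset_Icc_right hNM)]
  intro x hx hx'
  have : x ∉ p := by
    intro hxp
    exact hx' (Finset.mem_Icc.2 ⟨(Finset.mem_Icc.1 hx).1, hp x hxp⟩)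
  simp [Multiset.count_eq_zero_of_notMem this]

lemma card_le_sum (p : Multiset ℕ) (hp : ∀ i ∈ p, 1 ≤ i) : Multiset.card p ≤ p.sum := by
  simpa using Multiset.card_nsmul_le_sum hp


/-- The partition-sum polynomial. -/
noncomputable def aPoly (n : ℕ) : ℚ[X] :=
  ∑ μ : Nat.Partition n,
    (((-1 : ℚ) ^ (n - μ.parts.card) / (zPart μ : ℚ)) • (X : ℚ[X]) ^ μ.parts.card)

lemma zM_cons (N k : ℕ) (hk : k ∈ Finset.Icc 1 N) (p : Multiset ℕ) :
    zM N (k ::ₘ p) = (k * (p.count k + 1)) * zM N p := by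
  unfold zM
  rw [← Finset.mul_prod_erase (Finset.Icc 1 N)
      (fun i => i ^ ((k ::ₘ p).count i) * ((k ::ₘ p).count i).factorial) hk,
    ← Finset.mul_prod_erase (Finset.Icc 1 N)
      (fun i => i ^ (p.count i) * (p.count i).factorial) hk]
  have h1 : ∀ i ∈ (Finset.Icc 1 N).erase k,
      i ^ ((k ::ₘ p).count i) * ((k ::ₘ p).count i).factorial
        = i ^ (p.count i) * (p.count i).factorial := by
    intro i hi
    rw [Multiset.count_cons_of_ne (Finset.ne_of_mem_erase hi) p]
  rw [Finset.prod_congr rfl h1, Multiset.count_cons_self, pow_succ, Nat.factorial_succ]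
  ring

/-- Adding a part `k` to a partition of `m - k`. -/
def addPart {m k : ℕ} (hk : 1 ≤ k) (hkm : k ≤ m) (μ : Nat.Partition (m - k)) :
    Nat.Partition m where
  parts := k ::ₘ μ.parts
  parts_pos := by
    intro i hi
    rcases Multiset.mem_cons.1 hi with h | h
    · omega
    · exact μ.parts_pos h
  parts_sum := by
    rw [Multiset.sum_cons, μ.parts_sum]; omega

lemma step (m k : ℕ) (hk : 1 ≤ k) (hkm : k ≤ m) :
    ∑ μ : Nat.Partition m,
      (((k * μ.parts.count k : ℕ) : ℚ) * ((-1 : ℚ) ^ (m - μ.parts.card) / (zPart μ : ℚ)))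
        • (X : ℚ[X]) ^ μ.parts.card
      = ((-1 : ℚ) ^ (k - 1)) • (X * aPoly (m - k)) := by
  have hzM : ∀ {N : ℕ} (ν : Nat.Partition N), ((zPart ν : ℚ)) ≠ 0 := by
    intro N ν
    have := zM_pos N ν.parts (fun h => by exact absurd (ν.parts_pos h) (lt_irrefl 0))
    rw [zPart_eq_zM]
    exact_mod_cast this.ne'
  -- restrict the LHS to partitions containing k
  rw [← Finset.sum_filter_of_ne (p := fun μ : Nat.Partition m => k ∈ μ.parts)
    (by
      intro μ _ hne
      by_contra hkp
      apply hne
      rw [Multiset.count_eq_zero_of_notMem hkp]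
      simp)]
  -- rewrite the RHS as a sum and transport it by the bijection addPart
  rw [aPoly, Finset.mul_sum, Finset.smul_sum]
  refine (Finset.sum_bij (fun (μ : Nat.Partition (m - k)) _ => addPart hk hkm μ)
    ?_ ?_ ?_ ?_).symm
  · intro μ _
    simp only [Finset.mem_filter, Finset.mem_univ, true_and, addPart]
    exact Multiset.mem_cons_self k μ.parts
  · intro μ1 _ μ2 _ h
    have := congrArg Nat.Partition.parts h
    simp only [addPart] at this
    exact Nat.Partition.ext ((Multiset.cons_inj_right k).1 this)
  · intro μ hμ
    have hkμ : k ∈ μ.parts := (Finset.mem_filter.1 hμ).2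
    refine ⟨⟨μ.parts.erase k, fun h => μ.parts_pos (Multiset.mem_of_mem_erase h), ?_⟩,
      Finset.mem_univ _, ?_⟩
    · have h1 : k + (μ.parts.erase k).sum = μ.parts.sum := by
        rw [← Multiset.sum_cons, Multiset.cons_erase hkμ]
      rw [μ.parts_sum] at h1
      omega
    · apply Nat.Partition.ext
      simp only [addPart]
      exact Multiset.cons_erase hkμ
  · intro μ' _
    set p := μ'.parts with hp
    have hcard : Multiset.card p ≤ m - k := by
      have := card_le_sum p (fun i hi => μ'.parts_pos hi)
      rwa [μ'.parts_sum] at this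
    have hparts : (addPart hk hkm μ').parts = k ::ₘ p := rfl
    have hcount : (k ::ₘ p).count k = p.count k + 1 := Multiset.count_cons_self k p
    have hcardc : Multiset.card (k ::ₘ p) = Multiset.card p + 1 := by simp
    have hz : zPart (addPart hk hkm μ') = (k * (p.count k + 1)) * zPart μ' := by
      rw [zPart_eq_zM, zPart_eq_zM, hparts,
        zM_cons m k (Finset.mem_Icc.2 ⟨hk, hkm⟩) p,
        zM_mono (m - k) m (by omega) p (fun i hi => by
          have := Multiset.le_sum_of_mem hi
          rw [μ'.parts_sum] at this
          exact this)]
    have hsign : m - (Multiset.card p + 1) = (k - 1) + ((m - k) - Multiset.card p) := by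
      omega
    rw [hparts, hcount, hcardc, hz, hsign, pow_add, pow_succ]
    rw [mul_smul_comm, smul_smul, mul_comm (X : ℚ[X]) (X ^ Multiset.card p)]
    congr 1
    have hk0 : (k : ℚ) ≠ 0 := by exact_mod_cast (by omega : k ≠ 0)
    have hc0 : ((p.count k : ℚ) + 1) ≠ 0 := by positivity
    have hz0 := hzM μ'
    push_cast
    field_simp

lemma aPoly_zero : aPoly 0 = 1 := by
  rw [aPoly, Fintype.sum_unique]
  simp [zPart]

lemma parts_weighted_sum {m : ℕ} (μ : Nat.Partition m) :
    ∑ k ∈ Finset.Icc 1 m, k * μ.parts.count k = m := by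
  have h1 : μ.parts.toFinset ⊆ Finset.Icc 1 m := fun i hi =>
    mem_le_of_partition μ (Multiset.mem_toFinset.1 hi)
  have h2 : ∑ k ∈ μ.parts.toFinset, k * μ.parts.count k = μ.parts.sum := by
    calc ∑ k ∈ μ.parts.toFinset, k * μ.parts.count k
        = ∑ k ∈ μ.parts.toFinset, μ.parts.count k • id k := by
          simp [mul_comm, smul_eq_mul]
    _ = (μ.parts.map id).sum := (Finset.sum_multiset_map_count _ _).symm
    _ = μ.parts.sum := by simp
  rw [← Finset.sum_subset h1 (fun x _ hx => by
      rw [Multiset.count_eq_zero_of_notMem (fun h => hx (Multiset.mem_toFinset.2 h))]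
      ring), h2, μ.parts_sum]

lemma convolution (m : ℕ) :
    (m : ℚ) • aPoly m
      = ∑ k ∈ Finset.Icc 1 m, ((-1 : ℚ) ^ (k - 1)) • (X * aPoly (m - k)) := by
  rw [← Finset.sum_congr rfl (fun k hk =>
    step m k (Finset.mem_Icc.1 hk).1 (Finset.mem_Icc.1 hk).2), Finset.sum_comm, aPoly,
    Finset.smul_sum]
  refine Finset.sum_congr rfl fun μ _ => ?_
  rw [smul_smul, ← Finset.sum_smul, ← Finset.sum_mul, ← Nat.cast_sum, parts_weighted_sum μ]

lemma shift_sum (m : ℕ) :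
    ∑ k ∈ Finset.Icc 1 (m + 1), ((-1 : ℚ) ^ (k - 1)) • (X * aPoly (m + 1 - k))
      = X * aPoly m - ∑ k ∈ Finset.Icc 1 m, ((-1 : ℚ) ^ (k - 1)) • (X * aPoly (m - k)) := by
  have hins : Finset.Icc 1 (m + 1)
      = insert 1 ((Finset.Icc 1 m).map ⟨(· + 1), add_left_injective 1⟩) := by
    ext x
    simp only [Finset.mem_Icc, Finset.mem_insert, Finset.mem_map,
      Function.Embedding.coeFn_mk]
    constructor
    · rintro ⟨h1, h2⟩
      rcases Nat.eq_or_lt_of_le h1 with h | h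
      · exact Or.inl h.symm
      · exact Or.inr ⟨x - 1, by omega, by omega⟩
    · rintro (rfl | ⟨y, hy, rfl⟩) <;> simp_all <;> omega
  rw [hins, Finset.sum_insert (by
    simp only [Finset.mem_map, Function.Embedding.coeFn_mk, Finset.mem_Icc]
    rintro ⟨y, hy, h⟩
    omega), Finset.sum_map]
  simp only [Function.Embedding.coeFn_mk, Nat.add_sub_cancel, Nat.succ_sub_succ, pow_zero,
    one_smul, Nat.sub_self, Nat.sub_zero]
  congr 1
  rw [← Finset.sum_neg_distrib]
  refine Finset.sum_congr rfl fun k hk => ?_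
  have hk1 : 1 ≤ k := (Finset.mem_Icc.1 hk).1
  have : ((-1 : ℚ)) ^ k = -((-1 : ℚ) ^ (k - 1)) := by
    conv_lhs => rw [show k = (k - 1) + 1 by omega]
    rw [pow_succ]
    ring
  rw [this, neg_smul]

lemma recur (m : ℕ) :
    ((m : ℚ) + 1) • aPoly (m + 1) = X * aPoly m - (m : ℚ) • aPoly m := by
  have h1 := _root_.convolution (m + 1)
  rw [shift_sum, ← _root_.convolution] at h1
  rw [← h1]
  push_cast
  ring_nf

lemma aPoly_eq (n : ℕ) : aPoly n = ((n.factorial : ℚ))⁻¹ • descPochhammer ℚ n := by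
  induction n with
  | zero => simp [aPoly_zero, descPochhammer_zero]
  | succ m ih =>
    have hm1 : ((m : ℚ) + 1) ≠ 0 := by positivity
    have h : aPoly (m + 1) = ((m : ℚ) + 1)⁻¹ • (X * aPoly m - (m : ℚ) • aPoly m) := by
      rw [← recur m, smul_smul, inv_mul_cancel₀ hm1, one_smul]
    rw [h, ih, descPochhammer_succ_right, Nat.factorial_succ]
    have hD : X * (((m.factorial : ℚ))⁻¹ • descPochhammer ℚ m)
          - (m : ℚ) • (((m.factorial : ℚ))⁻¹ • descPochhammer ℚ m)
        = ((m.factorial : ℚ))⁻¹ • (descPochhammer ℚ m * (X - (m : ℚ[X]))) := by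
      rw [mul_smul_comm, smul_comm ((m : ℚ)) _, ← smul_sub]
      congr 1
      rw [Polynomial.smul_eq_C_mul, Polynomial.C_eq_natCast]
      ring
    rw [hD, smul_smul]
    congr 1
    push_cast
    rw [mul_inv]

theorem stmt0 (n : ℕ) (hn : 1 ≤ n) :
    ∑ μ : Nat.Partition n,
      (((-1 : ℚ) ^ (n - μ.parts.card) / (zPart μ : ℚ)) • (X : ℚ[X]) ^ μ.parts.card)
      = ((n.factorial : ℚ))⁻¹ • descPochhammer ℚ n := by
  exact aPoly_eq n
end

section
/- For all integers n, s ≥ 1 and 2 ≤ r ≤ n: the identity Σ_{i=1}^{n-r+1} C(n-i-1, r-2) · (i)_s = s! · C(n+s-1, n-r) holds, assuming the r = 2 base case Σ_{i=1}^{n-1} (i)_s = s!·C(n+s-1, n-2). (Equivalence of the right-hand sides of Conjectures 3 and 4.) -/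
open Finset

/-- Binomial coefficient `C(a, b)` with an integer lower index, zero when `b < 0`. -/
def chooseInt (a : ℕ) (b : ℤ) : ℕ := if b < 0 then 0 else a.choose b.toNat

theorem stmt15
    (base : ∀ n s : ℕ, 1 ≤ n → 1 ≤ s →
      ∑ i ∈ Finset.Icc 1 (n - 1), (ascPochhammer ℕ s).eval i
        = s.factorial * chooseInt (n + s - 1) ((n : ℤ) - 2))
    (n r s : ℕ) (hn : 1 ≤ n) (hs : 1 ≤ s) (hr : 2 ≤ r) (hrn : r ≤ n) :
    ∑ i ∈ Finset.Icc 1 (n - r + 1),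
        (n - i - 1).choose (r - 2) * (ascPochhammer ℕ s).eval i
      = s.factorial * (n + s - 1).choose (n - r) := by
  have base' : ∀ m : ℕ, ∑ i ∈ Finset.Icc 1 (m+1), (ascPochhammer ℕ s).eval i
      = s.factorial * (m+s+1).choose m := by
    intro m
    have h := base (m+2) s (by omega) hs
    have h1 : m + 2 - 1 = m + 1 := by omega
    have h2 : m + 2 + s - 1 = m + s + 1 := by omega
    have h3 : ((m:ℤ) + 2 - 2) = (m : ℤ) := by ring
    rw [h1, h2] at h
    push_cast at h
    rw [h3] at h
    simpa [chooseInt, not_lt.mpr (Int.natCast_nonneg m)] using h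
  have aux : ∀ t m : ℕ, ∑ i ∈ Finset.Icc 1 (m+1),
      (m+t+1-i).choose t * (ascPochhammer ℕ s).eval i
      = s.factorial * (m+t+s+1).choose m := by
    intro t
    induction t with
    | zero =>
      intro m
      simpa using base' m
    | succ t ih =>
      intro m
      induction m with
      | zero =>
        simp [ascPochhammer_eval_one, Nat.choose_self]
      | succ m ihm =>
        have step : ∀ i ∈ Finset.Icc 1 (m+1+1),
            (m+1+(t+1)+1-i).choose (t+1) * (ascPochhammer ℕ s).eval i
            = (m+t+2-i).choose t * (ascPochhammer ℕ s).eval i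
              + (m+t+2-i).choose (t+1) * (ascPochhammer ℕ s).eval i := by
          intro i hi
          simp only [Finset.mem_Icc] at hi
          have : m+1+(t+1)+1-i = (m+t+2-i)+1 := by omega
          rw [this, Nat.choose_succ_succ, add_mul]
        rw [Finset.sum_congr rfl step, Finset.sum_add_distrib]
        have hA : ∑ i ∈ Finset.Icc 1 (m+1+1),
            (m+t+2-i).choose t * (ascPochhammer ℕ s).eval i
            = s.factorial * (m+1+t+s+1).choose (m+1) := by
          have h := ih (m+1)
          rw [show m+1+t+1 = m+t+2 from by omega] at h
          exact h
        have hB : ∑ i ∈ Finset.Icc 1 (m+1+1),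
            (m+t+2-i).choose (t+1) * (ascPochhammer ℕ s).eval i
            = s.factorial * (m+(t+1)+s+1).choose m := by
          rw [Finset.sum_Icc_succ_top (by omega)]
          have htop : (m+t+2-(m+1+1)).choose (t+1) = 0 := by
            apply Nat.choose_eq_zero_of_lt; omega
          rw [htop, zero_mul, add_zero]
          have h := ihm
          rw [show m+(t+1)+1 = m+t+2 from by omega] at h
          exact h
        rw [hA, hB, ← mul_add]
        congr 1
        rw [show m+1+(t+1)+s+1 = (m+t+s+2)+1 from by omega,
          show m+1+t+s+1 = m+t+s+2 from by omega,
          show m+(t+1)+s+1 = m+t+s+2 from by omega]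
        conv_rhs => rw [Nat.choose_succ_succ]
        exact add_comm _ _
  have key := aux (r-2) (n-r)
  have hm : n - r + 1 = (n-r) + 1 := rfl
  rw [hm]
  have hterm : ∀ i ∈ Finset.Icc 1 (n-r+1),
      (n - i - 1).choose (r-2) * (ascPochhammer ℕ s).eval i
      = ((n-r)+(r-2)+1-i).choose (r-2) * (ascPochhammer ℕ s).eval i := by
    intro i hi
    simp only [Finset.mem_Icc] at hi
    congr 2
    omega
  rw [Finset.sum_congr rfl hterm, key]
  congr 2
  omega
end
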